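/- arXiv:0808.4082 — 3 statements merged into one kernel-verified Lean document; each statement's English description precedes it below -/
import Mathlib

section
/- Let O be a discrete valuation ring with maximal ideal p and fraction field k, and let (ν_{ij}) be an n×n integer matrix with ν_{ii} = 0 for all i. Then the O-submodule S = {A ∈ M_n(k) : A_{ij} ∈ p^{ν_{ij}} for all i,j} is an O-order in M_n(k) if and only if ν_{ik} + ν_{kj} ≥ ν_{ij} for all i, j, k. -/
noncomputable section

/-- The fractional ideal `p^ν = π^ν O` inside `k`. -/
def pset (O : Type*) [CommRing O] {k : Type*} [Field k] [Algebra O k] (π : k) (ν : ℤ) :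
    Set k := {x : k | ∃ c : O, x = algebraMap O k c * π ^ ν}

/-- An `O`-order in `M_n(k)`: a subalgebra which is finitely generated as an `O`-module
and is a full lattice (every matrix has a nonzero `O`-multiple in it). -/
def IsOrder (O : Type*) [CommRing O] {k : Type*} [Field k] [Algebra O k] {n : ℕ}
    (S : Subalgebra O (Matrix (Fin n) (Fin n) k)) : Prop :=
  (Subalgebra.toSubmodule S).FG ∧
    ∀ A : Matrix (Fin n) (Fin n) k, ∃ c : O, c ≠ 0 ∧ algebraMap O k c • A ∈ S

/-- A subset of `M_n(k)` is an `O`-order if it is the underlying set of an order. -/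
def IsOrderSet (O : Type*) [CommRing O] {k : Type*} [Field k] [Algebra O k] {n : ℕ}
    (s : Set (Matrix (Fin n) (Fin n) k)) : Prop :=
  ∃ S : Subalgebra O (Matrix (Fin n) (Fin n) k),
    (S : Set (Matrix (Fin n) (Fin n) k)) = s ∧ IsOrder O S

/-- The maximal order `Λ(m₁,…,m_n) = {A : A_{ij} ∈ p^{m_i - m_j}}`. -/
def Lam (O : Type*) [CommRing O] {k : Type*} [Field k] [Algebra O k] {n : ℕ} (π : k)
    (m : Fin n → ℤ) : Set (Matrix (Fin n) (Fin n) k) :=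
  {A | ∀ i j, A i j ∈ pset O π (m i - m j)}

/-- A maximal `O`-order. -/
def IsMaximalOrder (O : Type*) [CommRing O] {k : Type*} [Field k] [Algebra O k] {n : ℕ}
    (S : Subalgebra O (Matrix (Fin n) (Fin n) k)) : Prop :=
  IsOrder O S ∧ ∀ T : Subalgebra O (Matrix (Fin n) (Fin n) k), IsOrder O T → S ≤ T → T = S

/-- `m` is an integer point of the convex polytope `C(ν)` (in the hyperplane `x₁ = 0`). -/
def IntPt {n : ℕ} [NeZero n] (ν : Matrix (Fin n) (Fin n) ℤ) (m : Fin n → ℤ) : Prop :=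
  m 0 = 0 ∧ ∀ i j, -ν j i ≤ m i - m j ∧ m i - m j ≤ ν i j

/-- `ν` is reduced: `C(ν)` contains an integer point and every bounding hyperplane
`x_i - x_j = ν_{ij}` contains an integer point of `C(ν)`. -/
def Reduced {n : ℕ} [NeZero n] (ν : Matrix (Fin n) (Fin n) ℤ) : Prop :=
  (∃ m, IntPt ν m) ∧ ∀ i j, ∃ m, IntPt ν m ∧ m i - m j = ν i j

/-!
Closure of `S` under multiplication is exactly the triangle inequality: `p^a p^b = p^(a+b)`,
and `π^c ∈ p^b` iff `b ≤ c`, so testing closure on the product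
`(π^{ν_ij} E_ij)(π^{ν_jl} E_jl) = π^{ν_ij + ν_jl} E_il` of scaled matrix units gives
`ν_il ≤ ν_ij + ν_jl`, and conversely the triangle inequality bounds every term of `(AB)_il`.
The lattice conditions hold for every `ν`: `S` is spanned by the `π^{ν_ij} E_ij`, and clearing
the denominators of the finitely many entries `A_ij π^{-ν_ij}` puts a nonzero multiple of any
`A` into `S`.
-/

open Matrix

section FractionalIdeal

variable {O : Type*} [CommRing O] {k : Type*} [Field k] [Algebra O k] {π : k}

theorem mem_pset_iff_mem_span {ν : ℤ} {x : k} : x ∈ pset O π ν ↔ x ∈ O ∙ π ^ ν := by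
  simp [pset, Submodule.mem_span_singleton, Algebra.smul_def, eq_comm]

theorem mul_mem_pset (hπ0 : π ≠ 0) {a b : ℤ} {x y : k} (hx : x ∈ pset O π a)
    (hy : y ∈ pset O π b) : x * y ∈ pset O π (a + b) := by
  obtain ⟨c, rfl⟩ := hx
  obtain ⟨d, rfl⟩ := hy
  exact ⟨c * d, by rw [map_mul, zpow_add₀ hπ0]; ring⟩

theorem zpow_mem_pset_of_le {ϖ : O} (hπ : π = algebraMap O k ϖ) (hπ0 : π ≠ 0) {a b : ℤ}
    (hab : b ≤ a) : π ^ a ∈ pset O π b := by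
  refine ⟨ϖ ^ (a - b).toNat, ?_⟩
  rw [map_pow, ← hπ, ← zpow_natCast, Int.toNat_of_nonneg (sub_nonneg.2 hab), ← zpow_add₀ hπ0,
    sub_add_cancel]

theorem pset_antitone {ϖ : O} (hπ : π = algebraMap O k ϖ) (hπ0 : π ≠ 0) :
    Antitone (pset O π) := by
  rintro b a hab _ ⟨c, rfl⟩
  obtain ⟨d, hd⟩ := zpow_mem_pset_of_le hπ hπ0 hab
  exact ⟨c * d, by rw [hd, map_mul, mul_assoc]⟩

theorem le_of_zpow_mem_pset [IsFractionRing O k] {ϖ : O} (hϖ : Irreducible ϖ)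
    (hπ : π = algebraMap O k ϖ) {a b : ℤ} (h : π ^ a ∈ pset O π b) : b ≤ a := by
  by_contra! hab
  obtain ⟨c, hc⟩ := h
  have hπ0 : π ≠ 0 := hπ ▸ IsFractionRing.to_map_eq_zero_iff.not.2 hϖ.ne_zero
  have hm : (b - a).toNat ≠ 0 := by omega
  have hunit : ϖ ^ (b - a).toNat * c = 1 := by
    apply IsFractionRing.injective O k
    rw [map_mul, map_pow, ← hπ, ← zpow_natCast, Int.toNat_of_nonneg (by omega), map_one,
      zpow_sub₀ hπ0, div_mul_eq_mul_div, mul_comm, ← hc, div_self (zpow_ne_zero _ hπ0)]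
  exact hϖ.not_isUnit ((isUnit_pow_iff hm).1 (IsUnit.of_mul_eq_one _ hunit))

end FractionalIdeal

section MatrixLattice

variable (O : Type*) [CommRing O] {k : Type*} [Field k] [Algebra O k] {ι : Type*}
  (π : k) (ν : Matrix ι ι ℤ)

def matrixLattice : Submodule O (Matrix ι ι k) where
  carrier := {A | ∀ i j, A i j ∈ pset O π (ν i j)}
  add_mem' hA hB i j := mem_pset_iff_mem_span.2 <|
    add_mem (mem_pset_iff_mem_span.1 (hA i j)) (mem_pset_iff_mem_span.1 (hB i j))
  zero_mem' _ _ := mem_pset_iff_mem_span.2 (zero_mem _)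
  smul_mem' c _ hA i j := mem_pset_iff_mem_span.2 <|
    Submodule.smul_mem _ c (mem_pset_iff_mem_span.1 (hA i j))

variable {O π ν}

theorem single_zpow_mem_matrixLattice [DecidableEq ι] (i j : ι) :
    single i j (π ^ ν i j) ∈ matrixLattice O π ν := by
  intro a b
  by_cases hab : i = a ∧ j = b
  · obtain ⟨rfl, rfl⟩ := hab
    exact ⟨1, by rw [single_apply_same, map_one, one_mul]⟩
  · exact ⟨0, by rw [single_apply_of_ne _ _ _ _ _ hab, map_zero, zero_mul]⟩

theorem matrixLattice_eq_span [Fintype ι] [DecidableEq ι] :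
    matrixLattice O π ν =
      Submodule.span O (Set.range fun p : ι × ι => single p.1 p.2 (π ^ ν p.1 p.2)) := by
  refine le_antisymm (fun A hA => ?_) (Submodule.span_le.2 ?_)
  · rw [matrix_eq_sum_single A]
    refine Submodule.sum_mem _ fun i _ => Submodule.sum_mem _ fun j _ => ?_
    obtain ⟨c, hc⟩ := hA i j
    rw [hc, ← Algebra.smul_def, ← smul_single]
    exact Submodule.smul_mem _ c (Submodule.subset_span ⟨(i, j), rfl⟩)
  · rintro _ ⟨p, rfl⟩
    exact single_zpow_mem_matrixLattice p.1 p.2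

theorem matrixLattice_fg [Finite ι] : (matrixLattice O π ν).FG := by
  classical
  have := Fintype.ofFinite ι
  rw [matrixLattice_eq_span]
  exact Submodule.fg_span (Set.finite_range _)

theorem exists_smul_mem_matrixLattice [Finite ι] [IsFractionRing O k] (hπ0 : π ≠ 0)
    (A : Matrix ι ι k) : ∃ c : O, c ≠ 0 ∧ algebraMap O k c • A ∈ matrixLattice O π ν := by
  have := (algebraMap O k).domain_nontrivial
  obtain ⟨c, hc⟩ := IsLocalization.exist_integer_multiples_of_finite (nonZeroDivisors O)
    fun p : ι × ι => A p.1 p.2 * π ^ (-ν p.1 p.2)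
  refine ⟨c, nonZeroDivisors.ne_zero c.2, fun i j => ?_⟩
  obtain ⟨d, hd⟩ := hc (i, j)
  refine ⟨d, ?_⟩
  rw [Matrix.smul_apply, smul_eq_mul, hd, Algebra.smul_def, mul_assoc, mul_assoc,
    ← zpow_add₀ hπ0, neg_add_cancel, zpow_zero, mul_one]

theorem one_mem_matrixLattice [DecidableEq ι] {ϖ : O} (hπ : π = algebraMap O k ϖ)
    (hπ0 : π ≠ 0) (hdiag : ∀ i, ν i i ≤ 0) : 1 ∈ matrixLattice O π ν := by
  intro i j
  by_cases hij : i = j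
  · subst hij
    simpa only [one_apply_eq, zpow_zero] using zpow_mem_pset_of_le hπ hπ0 (hdiag i)
  · exact ⟨0, by rw [one_apply_ne hij, map_zero, zero_mul]⟩

theorem mul_mem_matrixLattice [Fintype ι] {ϖ : O} (hπ : π = algebraMap O k ϖ) (hπ0 : π ≠ 0)
    (htri : ∀ i j l, ν i j + ν j l ≥ ν i l) {A B : Matrix ι ι k}
    (hA : A ∈ matrixLattice O π ν) (hB : B ∈ matrixLattice O π ν) :
    A * B ∈ matrixLattice O π ν := by
  intro i l
  rw [mul_apply, mem_pset_iff_mem_span]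
  refine Submodule.sum_mem _ fun j _ => mem_pset_iff_mem_span.1 ?_
  exact pset_antitone hπ hπ0 (htri i j l) (mul_mem_pset hπ0 (hA i j) (hB j l))

theorem le_add_of_mul_mem_matrixLattice [Fintype ι] [IsFractionRing O k]
    {ϖ : O} (hϖ : Irreducible ϖ) (hπ : π = algebraMap O k ϖ)
    (hmul : ∀ A B, A ∈ matrixLattice O π ν → B ∈ matrixLattice O π ν →
      A * B ∈ matrixLattice O π ν) (i j l : ι) :
    ν i j + ν j l ≥ ν i l := by
  classical
  have hπ0 : π ≠ 0 := hπ ▸ IsFractionRing.to_map_eq_zero_iff.not.2 hϖ.ne_zero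
  have hprod := hmul _ _ (single_zpow_mem_matrixLattice i j) (single_zpow_mem_matrixLattice j l)
  rw [single_mul_single_same, ← zpow_add₀ hπ0] at hprod
  have hil := hprod i l
  rw [single_apply_same] at hil
  exact le_of_zpow_mem_pset hϖ hπ hil

end MatrixLattice

section MatrixOrder

variable {O : Type*} [CommRing O] {k : Type*} [Field k] [Algebra O k] {n : ℕ} {π : k}
  {ν : Matrix (Fin n) (Fin n) ℤ} {ϖ : O}

def matrixOrder (hπ : π = algebraMap O k ϖ) (hπ0 : π ≠ 0) (hdiag : ∀ i, ν i i ≤ 0)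
    (htri : ∀ i j l, ν i j + ν j l ≥ ν i l) : Subalgebra O (Matrix (Fin n) (Fin n) k) :=
  (matrixLattice O π ν).toSubalgebra (one_mem_matrixLattice hπ hπ0 hdiag)
    fun _ _ => mul_mem_matrixLattice hπ hπ0 htri

theorem isOrder_matrixOrder [IsFractionRing O k] (hπ : π = algebraMap O k ϖ) (hπ0 : π ≠ 0)
    (hdiag : ∀ i, ν i i ≤ 0) (htri : ∀ i j l, ν i j + ν j l ≥ ν i l) :
    IsOrder O (matrixOrder hπ hπ0 hdiag htri) :=
  ⟨matrixLattice_fg, exists_smul_mem_matrixLattice hπ0⟩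

end MatrixOrder

theorem stmt2_general {n : ℕ} {O : Type*} [CommRing O]
{k : Type*} [Field k] [Algebra O k] [IsFractionRing O k]
    (ϖ : O) (hϖ : Irreducible ϖ) (π : k) (hπ : π = algebraMap O k ϖ)
    (ν : Matrix (Fin n) (Fin n) ℤ) (hdiag : ∀ i, ν i i = 0) :
    IsOrderSet O {A : Matrix (Fin n) (Fin n) k | ∀ i j, A i j ∈ pset O π (ν i j)} ↔
      ∀ i j l : Fin n, ν i j + ν j l ≥ ν i l := by
  have hπ0 : π ≠ 0 := hπ ▸ IsFractionRing.to_map_eq_zero_iff.not.2 hϖ.ne_zero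
  constructor
  · rintro ⟨S, hS, -⟩
    have hS' : (S : Set (Matrix (Fin n) (Fin n) k)) = matrixLattice O π ν := hS
    refine le_add_of_mul_mem_matrixLattice hϖ hπ fun A B hA hB => ?_
    rw [← SetLike.mem_coe, ← hS'] at hA hB ⊢
    exact S.mul_mem hA hB
  · intro htri
    exact ⟨matrixOrder hπ hπ0 (fun i => (hdiag i).le) htri, rfl,
      isOrder_matrixOrder hπ hπ0 _ htri⟩

/-- `S = (p^{ν_{ij}})` with zero diagonal is an `O`-order iff
`ν_{ik} + ν_{kj} ≥ ν_{ij}` for all `i, j, k`. -/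
theorem stmt2 {n : ℕ} {O : Type*} [CommRing O] [IsDomain O] [IsDiscreteValuationRing O]
{k : Type*} [Field k] [Algebra O k] [IsFractionRing O k]
    (ϖ : O) (hϖ : Irreducible ϖ) (π : k) (hπ : π = algebraMap O k ϖ)
    (ν : Matrix (Fin n) (Fin n) ℤ) (hdiag : ∀ i, ν i i = 0) :
    IsOrderSet O {A : Matrix (Fin n) (Fin n) k | ∀ i j, A i j ∈ pset O π (ν i j)} ↔
      ∀ i j l : Fin n, ν i j + ν j l ≥ ν i l :=
  stmt2_general ϖ hϖ π hπ ν hdiag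
end
end

section
/- Let O be a discrete valuation ring with uniformizer π and fraction field k. Let ξ ∈ M_n(O) be an upper triangular matrix in Hermite normal form with diagonal entries π^{m_1}, …, π^{m_n} (so the off-diagonal entry a_{ij}, for i < j, lies in a fixed set of residues modulo π^{m_j}O, with 0 representing the zero class). Then ξ·D·ξ^{-1} ∈ M_n(O) for every diagonal matrix D with entries in O if and only if ξ is diagonal. -/
/-! Conjugating the idempotent `diagonal (Pi.single j 1)` by an upper triangular `ξ` gives the
rank-one matrix (column `j` of `ξ`) ⊗ (row `j` of `ξ⁻¹`), whose `(i, j)` entry is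
`ξ i j / ξ j j` since the diagonal of `ξ⁻¹` is the inverse of the diagonal of `ξ`. Integrality of
all these conjugates thus forces `ϖ ^ m j ∣ ξ i j`, i.e. `ξ i j = 0` by the normalisation of the
Hermite form. Conversely, a diagonal `ξ` commutes with every diagonal `D`. -/

open Matrix

namespace Matrix

variable {ι R : Type*} [Fintype ι] [DecidableEq ι]

theorem mul_diagonal_single_mul_apply [Semiring R] (A B : Matrix ι ι R) (j i l : ι) :
    (A * diagonal (Pi.single j (1 : R)) * B) i l = A i j * B j l := by
  rw [Matrix.mul_assoc, diagonal_single, mul_apply,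
    Finset.sum_eq_single_of_mem j (Finset.mem_univ j), single_mul_apply_same, one_mul]
  intro l' _ hl'
  rw [single_mul_apply_of_ne _ _ _ _ _ hl', mul_zero]

theorem IsUpperTriangular.inv_apply_self [Field R] [LinearOrder ι] {A : Matrix ι ι R}
    (hA : A.IsUpperTriangular) (hdet : IsUnit A.det) (j : ι) : A⁻¹ j j = (A j j)⁻¹ := by
  have : Invertible A := A.invertibleOfIsUnitDet hdet
  have hA' : A⁻¹.IsUpperTriangular := blockTriangular_inv_of_blockTriangular hA
  refine eq_inv_of_mul_eq_one_right ?_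
  calc A j j * A⁻¹ j j = (A * A⁻¹) j j := by
        rw [mul_apply, Finset.sum_eq_single_of_mem j (Finset.mem_univ j)]
        intro l _ hl
        obtain hlj | hjl := hl.lt_or_gt
        · rw [hA hlj, zero_mul]
        · rw [hA' hjl, mul_zero]
    _ = 1 := by rw [mul_nonsing_inv A hdet, one_apply_eq]

end Matrix

theorem IsFractionRing.dvd_of_div_mem_range {R K : Type*} [CommRing R] [Field K] [Algebra R K]
    [IsFractionRing R K] {a b : R} (hb : algebraMap R K b ≠ 0)
    (h : algebraMap R K a / algebraMap R K b ∈ Set.range (algebraMap R K)) : b ∣ a := by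
  obtain ⟨c, hc⟩ := h
  refine ⟨c, IsFractionRing.injective R K ?_⟩
  rw [map_mul, hc, mul_div_cancel₀ _ hb]

theorem stmt3_general {n : ℕ} {O : Type*} [CommRing O] [IsDomain O]
    {k : Type*} [Field k] [Algebra O k] [IsFractionRing O k]
    (ϖ : O) (hϖ : Irreducible ϖ)
    (ξ : Matrix (Fin n) (Fin n) O) (m : Fin n → ℕ)
    (hdiag : ∀ i, ξ i i = ϖ ^ m i)
    (hupper : ∀ i j : Fin n, j < i → ξ i j = 0)
    (hHNF : ∀ i j : Fin n, i < j → ϖ ^ m j ∣ ξ i j → ξ i j = 0) :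
    (∀ D : Fin n → O, ∀ i j : Fin n,
        ((ξ.map (algebraMap O k)) *
          Matrix.diagonal (fun i => algebraMap O k (D i)) *
          (ξ.map (algebraMap O k))⁻¹) i j ∈ Set.range (algebraMap O k)) ↔
      ∀ i j : Fin n, i ≠ j → ξ i j = 0 := by
  set f := algebraMap O k
  have hupper' : (ξ.map f).IsUpperTriangular := fun i j hij => by simp [hupper i j hij]
  have hdiag' : ∀ i, (ξ.map f) i i ≠ 0 := fun i => by
    rw [map_apply, hdiag, Ne, IsFractionRing.to_map_eq_zero_iff]
    exact pow_ne_zero _ hϖ.ne_zero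
  have hdet : IsUnit (ξ.map f).det := by
    rw [det_of_isUpperTriangular hupper', isUnit_iff_ne_zero]
    exact Finset.prod_ne_zero_iff.mpr fun i _ => hdiag' i
  constructor
  · intro h i j hij
    obtain hlt | hlt := hij.lt_or_gt
    · refine hHNF i j hlt (hdiag j ▸ IsFractionRing.dvd_of_div_mem_range (hdiag' j) ?_)
      have hsingle : (fun l => f ((Pi.single j 1 : Fin n → O) l)) = Pi.single j 1 := by
        rw [← Pi.single_op (fun _ => f) (fun _ => map_zero f), map_one]
      simpa [hsingle, mul_diagonal_single_mul_apply, hupper'.inv_apply_self hdet, div_eq_mul_inv]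
        using h (Pi.single j 1) i j
    · exact hupper i j hlt
  · intro h D i j
    have hdiagonal : (ξ.map f).IsDiag := IsDiag.map h (map_zero f)
    rw [← hdiagonal.diagonal_diag] at hdet ⊢
    rw [← (commute_diagonal _ _).eq, mul_nonsing_inv_cancel_right _ _ hdet,
      ← diagonal_map (map_zero f)]
    exact ⟨_, rfl⟩

/-- A matrix `ξ ∈ M_n(O)` in Hermite normal form (upper triangular, diagonal entries
`ϖ^{m_i}`, and for `i < j` the entry `ξ_{ij}` is a chosen residue representative
mod `ϖ^{m_j}`, with the zero class represented by `0`) satisfies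
`ξ D ξ⁻¹ ∈ M_n(O)` for every diagonal `D` with entries in `O` iff `ξ` is diagonal. -/
theorem stmt3 {n : ℕ} {O : Type*} [CommRing O] [IsDomain O] [IsDiscreteValuationRing O]
    {k : Type*} [Field k] [Algebra O k] [IsFractionRing O k]
    (ϖ : O) (hϖ : Irreducible ϖ)
    (ξ : Matrix (Fin n) (Fin n) O) (m : Fin n → ℕ)
    (hdiag : ∀ i, ξ i i = ϖ ^ m i)
    (hupper : ∀ i j : Fin n, j < i → ξ i j = 0)
    (hHNF : ∀ i j : Fin n, i < j → ϖ ^ m j ∣ ξ i j → ξ i j = 0) :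
    (∀ D : Fin n → O, ∀ i j : Fin n,
        ((ξ.map (algebraMap O k)) *
          Matrix.diagonal (fun i => algebraMap O k (D i)) *
          (ξ.map (algebraMap O k))⁻¹) i j ∈ Set.range (algebraMap O k)) ↔
      ∀ i j : Fin n, i ≠ j → ξ i j = 0 :=
  stmt3_general ϖ hϖ ξ m hdiag hupper hHNF
end

section
/- If (ν_{ij}) and (μ_{ij}) are two reduced n×n integer matrices with zero diagonal and the polytopes C(ν) and C(μ) contain the same set of integer points, then ν_{ij} = μ_{ij} for all i,j. Consequently, the map ν ↦ C(ν) is injective on reduced matrices. -/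
noncomputable section

/-- Two reduced matrices whose polytopes have the same integer points are equal. -/
theorem stmt11 {n : ℕ} [NeZero n]
    (ν μ : Matrix (Fin n) (Fin n) ℤ)
    (hν0 : ∀ i, ν i i = 0) (hμ0 : ∀ i, μ i i = 0)
    (hν : Reduced ν) (hμ : Reduced μ)
    (hsame : ∀ m : Fin n → ℤ, IntPt ν m ↔ IntPt μ m) :
    ν = μ := by
  ext i j
  obtain ⟨m, hm, hmij⟩ := hν.2 i j
  obtain ⟨m', hm', hmij'⟩ := hμ.2 i j
  have h1 : ν i j ≤ μ i j := by
    have := ((hsame m).mp hm).2 i j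
    omega
  have h2 : μ i j ≤ ν i j := by
    have := ((hsame m').mpr hm').2 i j
    omega
  omega
end
end
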